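/- Fix positive integers ℓ and w, a primitive ℓ-th root of unity ζ ∈ ℂ, and for 1 ≤ i ≤ ℓ let ψ_i : ℤ/ℓℤ → ℂ be the linear character ψ_i(a) = ζ^{(i-1)a}. Let G = (ℤ/ℓℤ)^w ⋊ S_w, where S_w acts by permuting coordinates. Let m_1, …, m_ℓ be nonnegative integers with m_1 + ⋯ + m_ℓ = w, partition {1, …, w} into consecutive blocks B_1, …, B_ℓ with |B_i| = m_i, let Y = S_{B_1} × ⋯ × S_{B_ℓ} be the corresponding Young subgroup of S_w, and let H = (ℤ/ℓℤ)^w ⋊ Y ≤ G. For each i let ρ_i be an irreducible complex character of S_{B_i}, and define the class function f on H by f(h, (x_1,…,x_ℓ)) = (∏_{i=1}^{ℓ} ∏_{j ∈ B_i} ψ_i(h_j)) · ∏_{i=1}^{ℓ} ρ_i(x_i) for h ∈ (ℤ/ℓℤ)^w and x_i ∈ S_{B_i}. Then for every σ ∈ S_w, the induced class function satisfies (Ind_H^G f)((1, σ)) = (Ind_Y^{S_w}(ρ_1 ⊠ ⋯ ⊠ ρ_ℓ))(σ). -/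

import Mathlib

open scoped Classical

/-- `f : G → ℂ` is an irreducible complex character of `G`. -/
def IsIrrChar (G : Type) [Group G] (f : G → ℂ) : Prop :=
  ∃ V : FDRep ℂ G, CategoryTheory.Simple V ∧ FDRep.character V = f

/-- Induction of a class function along a group homomorphism (for the inclusion of a subgroup
this is the usual induced class function). -/
noncomputable def indHom {H G : Type*} [Group H] [Fintype H] [Group G] [Fintype G]
    (φ : H →* G) (u : H → ℂ) : G → ℂ :=
  fun g => (Nat.card H : ℂ)⁻¹ *
    ∑ x : G, ∑ h : H, if φ h = x⁻¹ * g * x then u h else 0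

/-- The action of `Equiv.Perm α` on `α → M` permuting the coordinates. -/
def permAut (M : Type*) [CommGroup M] (α : Type*) : Equiv.Perm α →* MulAut (α → M) where
  toFun σ :=
    { toFun := fun f => f ∘ σ.symm
      invFun := fun f => f ∘ σ
      left_inv := fun f => by ext x; simp
      right_inv := fun f => by ext x; simp
      map_mul' := fun f g => rfl }
  map_one' := rfl
  map_mul' := fun σ τ => rfl

instance fintypeSemidirectProduct {N G : Type*} [Group N] [Group G] {φ : G →* MulAut N}
    [Fintype N] [Fintype G] : Fintype (N ⋊[φ] G) :=
  Fintype.ofEquiv (N × G)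
    ⟨fun p => ⟨p.1, p.2⟩, fun g => (g.left, g.right), fun _ => rfl, fun _ => rfl⟩
/-- The Young subgroup of `Equiv.Perm (Fin w)` attached to the block function `blk`:
permutations preserving each block `B_i = blk⁻¹(i)`. -/
def youngSubgroup {w k : ℕ} (blk : Fin w → Fin k) : Subgroup (Equiv.Perm (Fin w)) where
  carrier := {σ | ∀ j, blk (σ j) = blk j}
  one_mem' := fun _ => rfl
  mul_mem' := by
    intro a b ha hb j
    rw [Equiv.Perm.mul_apply, ha (b j), hb j]
  inv_mem' := by
    intro a ha j
    rw [← ha (a⁻¹ j), ← Equiv.Perm.mul_apply, mul_inv_cancel, Equiv.Perm.one_apply]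

/-- The permutation of the block `B_i` induced by an element of the Young subgroup. -/
def blockPerm {w k : ℕ} {blk : Fin w → Fin k} (σ : youngSubgroup blk) (i : Fin k) :
    Equiv.Perm {j : Fin w // blk j = i} :=
  Equiv.Perm.subtypePerm (σ : Equiv.Perm (Fin w)) (fun x => by rw [σ.2 x])
/-- The wreath product `ℤ/ℓℤ ≀ S_w = (ℤ/ℓℤ)^w ⋊ S_w`, with `S_w` permuting coordinates. -/
abbrev WreathProduct (ℓ w : ℕ) : Type :=
  (Fin w → Multiplicative (ZMod ℓ)) ⋊[permAut (Multiplicative (ZMod ℓ)) (Fin w)]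
    Equiv.Perm (Fin w)

/-- The subgroup `(ℤ/ℓℤ)^w ⋊ Y` of the wreath product, where `Y` is the Young subgroup
of `S_w` attached to the block function `blk`. -/
def bigYoung (ℓ : ℕ) {w k : ℕ} (blk : Fin w → Fin k) : Subgroup (WreathProduct ℓ w) where
  carrier := {g | ∀ j, blk (g.right j) = blk j}
  one_mem' := fun _ => rfl
  mul_mem' := by
    intro a b ha hb j
    rw [SemidirectProduct.mul_right, Equiv.Perm.mul_apply, ha (b.right j), hb j]
  inv_mem' := by
    intro a ha j
    rw [SemidirectProduct.inv_right, ← ha (a.right⁻¹ j), ← Equiv.Perm.mul_apply, mul_inv_cancel, Equiv.Perm.one_apply]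

/-- The permutation of the block `B_i` induced by an element of `bigYoung ℓ blk`. -/
def bigBlockPerm {ℓ w k : ℕ} {blk : Fin w → Fin k} (g : bigYoung ℓ blk) (i : Fin k) :
    Equiv.Perm {j : Fin w // blk j = i} :=
  Equiv.Perm.subtypePerm (g : WreathProduct ℓ w).right (fun x => by rw [g.2 x])
/-!
Conjugating `(1, σ)` by `x = (ν, τ)` gives `(j ↦ ν (σ⁻¹ (τ j)) / ν (τ j), τ⁻¹ σ τ)`, which lies in
`H` exactly when `π = τ⁻¹ σ τ` lies in `Y`. On such an element the linear part of `f` is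
`ζ ^ ∑ⱼ blk j * (μ (π⁻¹ j) - μ j)` with `μ = ν ∘ τ`, and the exponent vanishes mod `ℓ` because `π`
preserves `blk`. So the summand of the induction formula at `x` depends only on `τ`, and summing
over the `ℓ ^ w` choices of `ν` cancels against `|H| = ℓ ^ w |Y|`.
-/

lemma indHom_subtype {G : Type*} [Group G] [Fintype G] (H : Subgroup G) (u : H → ℂ) (g : G) :
    indHom H.subtype u g =
      (Nat.card H : ℂ)⁻¹ * ∑ x : G, if hx : x⁻¹ * g * x ∈ H then u ⟨_, hx⟩ else 0 := by
  unfold indHom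
  congr 1
  refine Finset.sum_congr rfl fun x _ => ?_
  split_ifs with hx
  · rw [Fintype.sum_eq_single (⟨_, hx⟩ : H)]
    · exact if_pos rfl
    · exact fun h hne => if_neg fun he => hne (Subtype.ext he)
  · exact Finset.sum_eq_zero fun h _ => if_neg fun he => hx (by rw [← he]; exact h.2)

lemma SemidirectProduct.sum_comp_right {N G R : Type*} [Group N] [Group G] [Fintype N]
    [Fintype G] [AddCommMonoid R] {φ : G →* MulAut N} (F : G → R) :
    ∑ x : N ⋊[φ] G, F x.right = Fintype.card N • ∑ g, F g := by
  let e : N × G ≃ N ⋊[φ] G := ⟨fun p => ⟨p.1, p.2⟩, fun x => (x.left, x.right),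
    fun _ => rfl, fun _ => rfl⟩
  rw [← e.sum_comp, Fintype.sum_prod_type]
  simp [e]

@[simp]
lemma permAut_apply {M α : Type*} [CommGroup M] (σ : Equiv.Perm α) (f : α → M) :
    permAut M α σ f = f ∘ σ.symm :=
  rfl

@[simp]
lemma permAut_symm_apply {M α : Type*} [CommGroup M] (σ : Equiv.Perm α) (f : α → M) :
    (permAut M α σ).symm f = f ∘ σ :=
  rfl

lemma permAut_conj_mk_one {M α : Type*} [CommGroup M] (ν : α → M) (τ σ : Equiv.Perm α) :
    (⟨ν, τ⟩ : (α → M) ⋊[permAut M α] Equiv.Perm α)⁻¹ * ⟨1, σ⟩ * ⟨ν, τ⟩ =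
      ⟨fun j => ν (σ⁻¹ (τ j)) / ν (τ j), τ⁻¹ * σ * τ⟩ := by
  ext j
  · simp [div_eq_mul_inv, mul_comm, -SemidirectProduct.mk_eq_inl_mul_inr]
  · rfl

lemma sum_mul_comp_perm_of_comp_eq {α R : Type*} [Fintype α] [CommSemiring R] (c μ : α → R)
    (π : Equiv.Perm α) (hc : ∀ j, c (π j) = c j) :
    ∑ j, c j * μ (π j) = ∑ j, c j * μ j := by
  rw [← Equiv.sum_comp π fun j => c j * μ j]
  simp only [hc]

section BlockCharacter

variable {α : Type*} [Fintype α] {ℓ : ℕ} {ζ : ℂ} {ψ : Fin ℓ → ZMod ℓ → ℂ}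

lemma prod_blocks_eq_pow_sum (hψ : ∀ i a, ψ i a = ζ ^ ((i : ℕ) * a.val)) (blk : α → Fin ℓ)
    (a : α → ZMod ℓ) :
    ∏ i, ∏ j : {j // blk j = i}, ψ i (a j) = ζ ^ ∑ j, (blk j : ℕ) * (a j).val := by
  rw [← Finset.prod_pow_eq_pow_sum, ← Fintype.prod_fiberwise blk]
  refine Finset.prod_congr rfl fun i _ => Finset.prod_congr rfl fun j _ => ?_
  rw [hψ, j.2]

lemma prod_blocks_sub_comp_perm_eq_one [NeZero ℓ] (hζ : ζ ^ ℓ = 1)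
    (hψ : ∀ i a, ψ i a = ζ ^ ((i : ℕ) * a.val)) (blk : α → Fin ℓ) (π : Equiv.Perm α)
    (hπ : ∀ j, blk (π j) = blk j) (μ : α → ZMod ℓ) :
    ∏ i, ∏ j : {j // blk j = i}, ψ i (μ (π j) - μ j) = 1 := by
  obtain ⟨k, hk⟩ : ℓ ∣ ∑ j, (blk j : ℕ) * (μ (π j) - μ j).val := by
    rw [← ZMod.natCast_eq_zero_iff]
    push_cast
    simp only [ZMod.natCast_val, ZMod.cast_id', id, mul_sub, Finset.sum_sub_distrib]
    rw [sum_mul_comp_perm_of_comp_eq _ _ π (by simp [hπ]), sub_self]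
  rw [prod_blocks_eq_pow_sum hψ blk fun j => μ (π j) - μ j, hk, pow_mul, hζ, one_pow]

end BlockCharacter

lemma card_bigYoung (ℓ : ℕ) [NeZero ℓ] {w k : ℕ} (blk : Fin w → Fin k) :
    Nat.card (bigYoung ℓ blk) = ℓ ^ w * Nat.card (youngSubgroup blk) := by
  let e : bigYoung ℓ blk ≃ (Fin w → Multiplicative (ZMod ℓ)) × youngSubgroup blk :=
    { toFun := fun g => ((g : WreathProduct ℓ w).left, ⟨(g : WreathProduct ℓ w).right, g.2⟩)
      invFun := fun p => ⟨⟨p.1, p.2⟩, p.2.2⟩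
      left_inv := fun _ => rfl
      right_inv := fun _ => rfl }
  rw [Nat.card_congr e, Nat.card_prod]
  simp

lemma prod_blocks_conj_mk_one_left_eq_one {ℓ w : ℕ} [NeZero ℓ] {ζ : ℂ} (hζ : ζ ^ ℓ = 1)
    {ψ : Fin ℓ → ZMod ℓ → ℂ} (hψ : ∀ i a, ψ i a = ζ ^ ((i : ℕ) * a.val)) {blk : Fin w → Fin ℓ}
    (σ : Equiv.Perm (Fin w)) (x : WreathProduct ℓ w) (hx : x⁻¹ * ⟨1, σ⟩ * x ∈ bigYoung ℓ blk) :
    ∏ i, ∏ j : {j // blk j = i},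
      ψ i (Multiplicative.toAdd ((x⁻¹ * ⟨1, σ⟩ * x).left j)) = 1 := by
  obtain ⟨ν, τ⟩ := x
  rw [permAut_conj_mk_one] at hx ⊢
  have hπ : τ⁻¹ * σ⁻¹ * τ ∈ youngSubgroup blk := by
    simpa [mul_assoc] using (youngSubgroup blk).inv_mem (x := τ⁻¹ * σ * τ) hx
  convert prod_blocks_sub_comp_perm_eq_one hζ hψ blk _ hπ (Multiplicative.toAdd ∘ ν ∘ τ)
    using 4
  simp [Equiv.Perm.mul_apply]

theorem wreath_induction_on_pure_permutations_general
    (ℓ w : ℕ) [NeZero ℓ]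
    (ζ : ℂ) (hζ : IsPrimitiveRoot ζ ℓ)
    (ψ : Fin ℓ → ZMod ℓ → ℂ) (hψ : ∀ i a, ψ i a = ζ ^ ((i : ℕ) * a.val))
    (blk : Fin w → Fin ℓ)
    (ρ : (i : Fin ℓ) → Equiv.Perm {j : Fin w // blk j = i} → ℂ)
    (f : bigYoung ℓ blk → ℂ)
    (hf : ∀ g : bigYoung ℓ blk,
      f g = (∏ i : Fin ℓ, ∏ j : {j : Fin w // blk j = i},
               ψ i (Multiplicative.toAdd ((g : WreathProduct ℓ w).left (j : Fin w)))) *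
            ∏ i : Fin ℓ, ρ i (bigBlockPerm g i)) :
    ∀ σ : Equiv.Perm (Fin w),
      indHom (bigYoung ℓ blk).subtype f
          (⟨1, σ⟩ : WreathProduct ℓ w) =
        indHom (youngSubgroup blk).subtype
          (fun τ : youngSubgroup blk => ∏ i : Fin ℓ, ρ i (blockPerm τ i)) σ := by
  intro σ
  rw [indHom_subtype, indHom_subtype]
  set F : Equiv.Perm (Fin w) → ℂ := fun τ =>
    if hy : τ⁻¹ * σ * τ ∈ youngSubgroup blk then ∏ i, ρ i (blockPerm ⟨_, hy⟩ i) else 0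
  have hterm (x : WreathProduct ℓ w) :
      (if hx : x⁻¹ * ⟨1, σ⟩ * x ∈ bigYoung ℓ blk then f ⟨_, hx⟩ else 0) = F x.right := by
    have hmem : x⁻¹ * ⟨1, σ⟩ * x ∈ bigYoung ℓ blk ↔
        x.right⁻¹ * σ * x.right ∈ youngSubgroup blk := Iff.rfl
    simp only [F]
    by_cases hx : x⁻¹ * ⟨1, σ⟩ * x ∈ bigYoung ℓ blk
    · rw [dif_pos hx, dif_pos (hmem.1 hx), hf,
        prod_blocks_conj_mk_one_left_eq_one hζ.pow_eq_one hψ σ x hx, one_mul]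
      -- `bigBlockPerm` of the conjugate unfolds to `blockPerm` of `x.right⁻¹ * σ * x.right`
      rfl
    · rw [dif_neg hx, dif_neg (mt hmem.2 hx)]
  rw [Finset.sum_congr rfl fun x _ => hterm x,
    SemidirectProduct.sum_comp_right F, card_bigYoung]
  have hℓ : (ℓ : ℂ) ^ w ≠ 0 := pow_ne_zero w (Nat.cast_ne_zero.2 (NeZero.ne ℓ))
  simp only [nsmul_eq_mul, Fintype.card_fun, Fintype.card_multiplicative, ZMod.card,
    Fintype.card_fin, Nat.cast_mul, Nat.cast_pow]
  field_simp

/-- let `G = (ℤ/ℓℤ)^w ⋊ S_w`, let `Y` be the Young subgroup of `S_w` given by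
consecutive blocks `B_1, …, B_ℓ` of sizes `m_1, …, m_ℓ`, and let `H = (ℤ/ℓℤ)^w ⋊ Y ≤ G`.
Let `ψ_i(a) = ζ^{(i-1)a}` for a primitive `ℓ`-th root of unity `ζ`, let `ρ_i` be an
irreducible character of the symmetric group on `B_i`, and let
`f(h, (x_1, …, x_ℓ)) = (∏_i ∏_{j ∈ B_i} ψ_i(h_j)) · ∏_i ρ_i(x_i)` on `H`. Then for every
`σ ∈ S_w`, `(Ind_H^G f)(1, σ) = (Ind_Y^{S_w}(ρ_1 ⊠ ⋯ ⊠ ρ_ℓ))(σ)`. -/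
theorem wreath_induction_on_pure_permutations
    (ℓ w : ℕ) [NeZero ℓ] (hw : 0 < w)
    (ζ : ℂ) (hζ : IsPrimitiveRoot ζ ℓ)
    (ψ : Fin ℓ → ZMod ℓ → ℂ) (hψ : ∀ i a, ψ i a = ζ ^ ((i : ℕ) * a.val))
    (m : Fin ℓ → ℕ) (hm : ∑ i, m i = w)
    (blk : Fin w → Fin ℓ) (hmono : Monotone blk)
    (hcard : ∀ i, (Finset.univ.filter fun j => blk j = i).card = m i)
    (ρ : (i : Fin ℓ) → Equiv.Perm {j : Fin w // blk j = i} → ℂ)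
    (hρ : ∀ i, IsIrrChar (Equiv.Perm {j : Fin w // blk j = i}) (ρ i))
    (f : bigYoung ℓ blk → ℂ)
    (hf : ∀ g : bigYoung ℓ blk,
      f g = (∏ i : Fin ℓ, ∏ j : {j : Fin w // blk j = i},
               ψ i (Multiplicative.toAdd ((g : WreathProduct ℓ w).left (j : Fin w)))) *
            ∏ i : Fin ℓ, ρ i (bigBlockPerm g i)) :
    ∀ σ : Equiv.Perm (Fin w),
      indHom (bigYoung ℓ blk).subtype f
          (⟨1, σ⟩ : WreathProduct ℓ w) =
        indHom (youngSubgroup blk).subtype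
          (fun τ : youngSubgroup blk => ∏ i : Fin ℓ, ρ i (blockPerm τ i)) σ :=
  wreath_induction_on_pure_permutations_general ℓ w ζ hζ ψ hψ blk ρ f hf
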